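/- For the prior distribution on full binary subtrees T of a perfect binary tree T_max defined by p(T) = (∏_{s ∈ I_T} g_s)(∏_{s' ∈ L_T} (1 - g_{s'})), where I_T and L_T are the inner and leaf nodes of T, g_s ∈ [0,1] for each node s, and g_s = 0 for every leaf node s of T_max, the probabilities sum to 1: Σ_{T ∈ 𝒯} p(T) = 1, where 𝒯 is the set of all full subtrees of T_max rooted at the root of T_max. -/

import Mathlib

/-! Induct on the depth, summing over subtrees rooted at an arbitrary address `s`. The single
leaf contributes `1 - g s`, and the trees whose root has two children factor as `g s` times the
product of the sums over the two child subtrees, each equal to `1` by induction; at depth `0`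
only the leaf remains, where `g` vanishes. -/

/-- A full binary tree: every inner node has exactly two children. -/
inductive FT : Type
  | leaf : FT
  | node : FT → FT → FT
deriving DecidableEq

/-- The set of all full subtrees (rooted at the root) of the perfect binary
tree of depth `D`, encoded as full binary trees of depth at most `D`. -/
def treesUpTo : ℕ → Finset FT
  | 0 => {FT.leaf}
  | D + 1 =>
      insert FT.leaf
        (((treesUpTo D) ×ˢ (treesUpTo D)).image fun p => FT.node p.1 p.2)

/-- The prior probability of a full subtree, where the node at address `s`
(a list of left/right choices from the root) has edge-spreading probability
`g s`: inner nodes contribute `g s`, leaf nodes contribute `1 - g s`. -/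
def treePrior (g : List Bool → ℝ) : FT → List Bool → ℝ
  | FT.leaf, s => 1 - g s
  | FT.node l r, s =>
      g s * treePrior g l (s ++ [false]) * treePrior g r (s ++ [true])

theorem FT.node_injective₂ : Function.Injective fun p : FT × FT => FT.node p.1 p.2 :=
  fun _ _ h => Prod.ext (FT.node.inj h).1 (FT.node.inj h).2

theorem sum_treesUpTo_succ {M : Type*} [AddCommMonoid M] (D : ℕ) (f : FT → M) :
    ∑ T ∈ treesUpTo (D + 1), f T =
      f FT.leaf + ∑ l ∈ treesUpTo D, ∑ r ∈ treesUpTo D, f (FT.node l r) := by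
  rw [treesUpTo, Finset.sum_insert (by simp),
    Finset.sum_image fun _ _ _ _ h => FT.node_injective₂ h, Finset.sum_product]

theorem sum_treePrior_treesUpTo (g : List Bool → ℝ) (D : ℕ) (s : List Bool)
    (h : ∀ t : List Bool, t.length = D → g (s ++ t) = 0) :
    ∑ T ∈ treesUpTo D, treePrior g T s = 1 := by
  induction D generalizing s with
  | zero =>
    simpa [treesUpTo, treePrior] using h [] rfl
  | succ D ih =>
    have hchild (b : Bool) : ∑ T ∈ treesUpTo D, treePrior g T (s ++ [b]) = 1 :=
      ih _ fun t ht => by simpa using h (b :: t) (by simp [ht])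
    rw [sum_treesUpTo_succ]
    simp only [treePrior, mul_assoc, ← Finset.mul_sum, hchild, mul_one, sub_add_cancel]

theorem treePrior_sums_to_one_general (Dmax : ℕ) (g : List Bool → ℝ)
    (hleaf : ∀ s : List Bool, s.length = Dmax → g s = 0) :
    ∑ T ∈ treesUpTo Dmax, treePrior g T [] = 1 :=
  sum_treePrior_treesUpTo g Dmax [] hleaf

/-- The tree prior `p(T) = ∏_{s ∈ I_T} g_s ∏_{s' ∈ L_T} (1 - g_{s'})` sums to
one over all full subtrees of the perfect binary tree of depth `D_max`,
provided `g_s ∈ [0,1]` and `g_s = 0` for the leaves of `T_max`. -/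
theorem treePrior_sums_to_one (Dmax : ℕ) (g : List Bool → ℝ)
    (hg : ∀ s, 0 ≤ g s ∧ g s ≤ 1)
    (hleaf : ∀ s : List Bool, s.length = Dmax → g s = 0) :
    ∑ T ∈ treesUpTo Dmax, treePrior g T [] = 1 :=
  treePrior_sums_to_one_general Dmax g hleaf
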